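/- For each i = 1,…,d, the subgroup V_i of 𝓞_H^× is stable under the natural action of G = Gal(H/F) on 𝓞_H^×, i.e. g(V_i) = V_i for every g ∈ G. -/

import Mathlib

/-!
If `g ∈ G`, then `g (h_i⁻¹ (s η)) = h_i⁻¹ ((h_i g h_i⁻¹ s) η)`, and `h_i g h_i⁻¹ s ∈ G` by
normality; it equals `t` or `t τ` for some `t ∈ S`, and `τ η = η`. So `g` sends each generator
`h_i⁻¹ (s η)` of `V_i` to another generator, and pushing the exponents forward along this
map on `S` keeps their sum zero. Applying this to `g` and `g⁻¹` gives `g (V_i) = V_i`.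
-/

open NumberField

/-- The action of a `ℚ`-automorphism of a number field `H` on the units of its
ring of integers. -/
noncomputable def galU (H : Type*) [Field H] [NumberField H] (g : H ≃ₐ[ℚ] H) :
    (𝓞 H)ˣ ≃* (𝓞 H)ˣ :=
  Units.mapEquiv (galRestrict ℤ ℚ H (𝓞 H) g).toRingEquiv.toMulEquiv

/-- The subgroup `V_i = { ∏_{g ∈ S} (h_i⁻¹(g(η)))^(a_g) : ∑ a_g = 0 }` of `𝓞_H^×`,
here given as a set, with `hi` playing the role of `h_i`. -/
noncomputable def VSet (H : Type*) [Field H] [NumberField H]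
    (S : Finset (H ≃ₐ[ℚ] H)) (η : (𝓞 H)ˣ) (hi : H ≃ₐ[ℚ] H) : Set ((𝓞 H)ˣ) :=
  { u | ∃ a : (H ≃ₐ[ℚ] H) → ℤ,
      (∑ g ∈ S, a g) = 0 ∧ u = ∏ g ∈ S, galU H (hi⁻¹ * g) η ^ a g }

section ZeroSumProducts

variable {ι κ M N : Type*} [CommGroup M] [CommGroup N]

theorem Finset.prod_zpow_eq_zpow_sum (s : Finset ι) (f : ι → ℤ) (a : M) :
    ∏ i ∈ s, a ^ f i = a ^ ∑ i ∈ s, f i :=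
  Finset.cons_induction (by simp) (fun _ _ _ ih ↦ by
    rw [Finset.prod_cons, Finset.sum_cons, zpow_add, ih]) s

def zeroSumProducts (S : Finset ι) (x : ι → M) : Set M :=
  {u | ∃ a : ι → ℤ, ∑ i ∈ S, a i = 0 ∧ u = ∏ i ∈ S, x i ^ a i}

theorem image_zeroSumProducts_subset (f : M →* N) {S : Finset ι} {T : Finset κ}
    {x : ι → M} {y : κ → N} {σ : ι → κ} (hσT : ∀ i ∈ S, σ i ∈ T)
    (hσ : ∀ i ∈ S, f (x i) = y (σ i)) :
    f '' zeroSumProducts S x ⊆ zeroSumProducts T y := by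
  classical
  rintro _ ⟨_, ⟨a, ha, rfl⟩, rfl⟩
  refine ⟨fun j ↦ ∑ i ∈ S with σ i = j, a i, by rw [Finset.sum_fiberwise_of_maps_to hσT, ha], ?_⟩
  calc f (∏ i ∈ S, x i ^ a i) = ∏ i ∈ S, y (σ i) ^ a i := by
        rw [map_prod]
        exact Finset.prod_congr rfl fun i hi ↦ by rw [map_zpow, hσ i hi]
    _ = ∏ j ∈ T, ∏ i ∈ S with σ i = j, y j ^ a i := by
        refine (Finset.prod_fiberwise_of_maps_to hσT _).symm.trans ?_
        exact Finset.prod_congr rfl fun j _ ↦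
          Finset.prod_congr rfl fun i hi ↦ by rw [(Finset.mem_filter.1 hi).2]
    _ = ∏ j ∈ T, y j ^ ∑ i ∈ S with σ i = j, a i := by
        simp only [Finset.prod_zpow_eq_zpow_sum]

end ZeroSumProducts

section GaloisAction

variable {H : Type*} [Field H] [NumberField H]

theorem galU_mul_apply (g k : H ≃ₐ[ℚ] H) (u : (𝓞 H)ˣ) :
    galU H (g * k) u = galU H g (galU H k u) := by
  ext
  simp [galU, map_mul]

theorem galU_one_apply (u : (𝓞 H)ˣ) : galU H 1 u = u := by
  ext
  simp [galU, map_one]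

theorem VSet_eq_zeroSumProducts (S : Finset (H ≃ₐ[ℚ] H)) (η : (𝓞 H)ˣ) (hi : H ≃ₐ[ℚ] H) :
    VSet H S η hi = zeroSumProducts S fun s ↦ galU H (hi⁻¹ * s) η :=
  rfl

variable {τ : H ≃ₐ[ℚ] H} {G : Subgroup (H ≃ₐ[ℚ] H)} [G.Normal] {η : (𝓞 H)ˣ}
  {S : Finset (H ≃ₐ[ℚ] H)}

theorem exists_mem_galU_galU_eq (hητ : galU H τ η = η) (hSG : ∀ s ∈ S, s ∈ G)
    (hS : ∀ g ∈ G, ∃ s ∈ S, s = g ∨ s = g * τ) (hi : H ≃ₐ[ℚ] H)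
    {g : H ≃ₐ[ℚ] H} (hg : g ∈ G) {s : H ≃ₐ[ℚ] H} (hs : s ∈ S) :
    ∃ t ∈ S, galU H g (galU H (hi⁻¹ * s) η) = galU H (hi⁻¹ * t) η := by
  have hconj : hi⁻¹ * (hi * g * hi⁻¹ * s) = g * (hi⁻¹ * s) := by group
  have hmem : hi * g * hi⁻¹ * s ∈ G := mul_mem (Subgroup.Normal.conj_mem ‹_› g hg hi) (hSG s hs)
  obtain ⟨t, htS, rfl | rfl⟩ := hS _ hmem
  · exact ⟨_, htS, by rw [← galU_mul_apply, hconj]⟩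
  · exact ⟨_, htS, by rw [← mul_assoc, galU_mul_apply _ τ, hητ, ← galU_mul_apply, hconj]⟩

theorem galU_image_VSet_subset (hητ : galU H τ η = η) (hSG : ∀ s ∈ S, s ∈ G)
    (hS : ∀ g ∈ G, ∃ s ∈ S, s = g ∨ s = g * τ) (hi : H ≃ₐ[ℚ] H)
    ⦃g : H ≃ₐ[ℚ] H⦄ (hg : g ∈ G) :
    galU H g '' VSet H S η hi ⊆ VSet H S η hi := by
  choose! σ hσS hσ using fun s (hs : s ∈ S) ↦ exists_mem_galU_galU_eq hητ hSG hS hi hg hs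
  rw [VSet_eq_zeroSumProducts]
  exact image_zeroSumProducts_subset (galU H g : (𝓞 H)ˣ →* (𝓞 H)ˣ) hσS hσ

end GaloisAction

theorem stmt_1_general (H : Type*) [Field H] [NumberField H]
    (τ : H ≃ₐ[ℚ] H)
    -- `G = Gal(H/F)` for a totally real subfield `F ⊆ H`, Galois over `ℚ`, of degree `d`
    (d : ℕ)
    (Gsub : Subgroup (H ≃ₐ[ℚ] H)) [Gsub.Normal]
    -- representatives of the left cosets of `G` in `Gal(H/ℚ)`, with `h 0 = 1`
    (h : Fin d → (H ≃ₐ[ℚ] H))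
    -- the Minkowski unit `η`
    (η : (𝓞 H)ˣ) (hητ : galU H τ η = η)
    -- representatives of the left cosets of `{1, τ}` in `G`
    (S : Finset (H ≃ₐ[ℚ] H)) (hSG : ∀ s ∈ S, s ∈ Gsub)
    (hS : ∀ g ∈ Gsub, ∃! s, s ∈ S ∧ (s = g ∨ s = g * τ)) :
    ∀ i : Fin d, ∀ g ∈ Gsub,
      (fun u => galU H g u) '' VSet H S η (h i) = VSet H S η (h i) := by
  intro i g hg
  have hsub := galU_image_VSet_subset hητ hSG (fun g hg ↦ (hS g hg).exists) (h i)
  refine (hsub hg).antisymm fun u hu ↦ ⟨galU H g⁻¹ u, hsub (inv_mem hg) ⟨u, hu, rfl⟩, ?_⟩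
  rw [← galU_mul_apply, mul_inv_cancel, galU_one_apply]

/-- Each `V_i` is stable under the natural action of `G = Gal(H/F)`:
`g(V_i) = V_i` for all `g ∈ G`. -/
theorem stmt_1 (H : Type*) [Field H] [NumberField H] [IsGalois ℚ H]
    (hH : (H →+* ℝ) → False)
    (ι : H →+* ℂ) (τ : H ≃ₐ[ℚ] H)
    (hιτ : ∀ x : H, ι (τ x) = starRingEnd ℂ (ι x))
    (hτ2 : τ * τ = 1) (hτ1 : τ ≠ 1)
    -- `G = Gal(H/F)` for a totally real subfield `F ⊆ H`, Galois over `ℚ`, of degree `d`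
    (d : ℕ) (hd : 0 < d)
    (Gsub : Subgroup (H ≃ₐ[ℚ] H)) [Gsub.Normal] (hGd : Gsub.index = d)
    (hτG : τ ∈ Gsub)
    -- representatives of the left cosets of `G` in `Gal(H/ℚ)`, with `h 0 = 1`
    (h : Fin d → (H ≃ₐ[ℚ] H)) (hreps : ∀ g : H ≃ₐ[ℚ] H, ∃! i : Fin d, (h i)⁻¹ * g ∈ Gsub)
    (h1 : h ⟨0, hd⟩ = 1)
    -- the Minkowski unit `η`
    (η : (𝓞 H)ˣ) (hητ : galU H τ η = η)
    (T : Finset (H ≃ₐ[ℚ] H))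
    (hT : ∀ g : H ≃ₐ[ℚ] H, ∃! t, t ∈ T ∧ (t = g ∨ t = g * τ))
    (hηT : (∏ g ∈ T, galU H g η) = 1)
    (hηker : ∀ a : (H ≃ₐ[ℚ] H) → ℤ,
      (∏ g ∈ T, galU H g η ^ a g) = 1 ↔ ∃ c : ℤ, ∀ g ∈ T, a g = c)
    -- representatives of the left cosets of `{1, τ}` in `G`
    (S : Finset (H ≃ₐ[ℚ] H)) (hSG : ∀ s ∈ S, s ∈ Gsub)
    (hS : ∀ g ∈ Gsub, ∃! s, s ∈ S ∧ (s = g ∨ s = g * τ)) :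
    ∀ i : Fin d, ∀ g ∈ Gsub,
      (fun u => galU H g u) '' VSet H S η (h i) = VSet H S η (h i) :=
  stmt_1_general H τ d Gsub h η hητ S hSG hS
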